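/- (Biconjugate orthonormality of the QBIO process) Under the recurrences of the quaternion three-term biconjugate orthonormalization procedure (Algorithm 2), assuming no breakdown (all σⱼ ≠ 0, ρⱼ₊₁ ≠ 0, εⱼ₊₁ ≠ 0 for j ≤ m), the generated vectors satisfy ⟨vᵢ, wⱼ⟩ = 0 whenever i ≠ j and ⟨vⱼ, wⱼ⟩ = σⱼ, for all 1 ≤ i, j ≤ m. -/

import Mathlib

/-!
Induction on `k`. Suppose `⟨vᵢ, wⱼ⟩ = 0` for `i ≠ j ≤ k` and pair the three-term recurrence
`A vₖ = vₖ₊₁ ρₖ₊₁ + vₖ αₖ + vₖ₋₁ τₖ` with `wⱼ`, `j ≤ k`. Moving `A` across as `Aᴴ` and expanding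
`Aᴴ wⱼ` by its own recurrence, `⟨A vₖ, wⱼ⟩` reduces to `εⱼ₊₁ ⟨vₖ, wⱼ₊₁⟩`; together with the
choice of `αₖ` (for `j = k`) and of `τₖ` (for `j = k - 1`) this is exactly
`⟨vₖ, wⱼ⟩ αₖ + ⟨vₖ₋₁, wⱼ⟩ τₖ`, so `⟨vₖ₊₁, wⱼ⟩ ρₖ₊₁ = 0`. The recurrences are symmetric under
`(A, v, w) ↦ (Aᴴ, w, v)`, and conjugating the same argument gives `⟨vᵢ, wₖ₊₁⟩ = 0`.
-/

open Quaternion Matrix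

/-- The quaternionic inner product `⟨x, y⟩ = Σᵢ yᵢ* xᵢ` on `ℚⁿ`. -/
noncomputable def qInner {n : ℕ} (x y : Fin n → ℍ[ℝ]) : ℍ[ℝ] :=
  ∑ i, star (y i) * x i

/-- The quaternionic Euclidean norm `‖x‖₂ = √(Σᵢ |xᵢ|²)` on `ℚⁿ`. -/
noncomputable def qNorm {n : ℕ} (x : Fin n → ℍ[ℝ]) : ℝ :=
  Real.sqrt (∑ i, ‖x i‖ ^ 2)

section QInner

variable {n : ℕ}

lemma qInner_zero_right (x : Fin n → ℍ[ℝ]) : qInner x 0 = 0 := by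
  simp [qInner]

lemma qInner_add_left (x y z : Fin n → ℍ[ℝ]) :
    qInner (fun k => x k + y k) z = qInner x z + qInner y z := by
  simp [qInner, mul_add, Finset.sum_add_distrib]

lemma qInner_add_right (x y z : Fin n → ℍ[ℝ]) :
    qInner x (fun k => y k + z k) = qInner x y + qInner x z := by
  simp [qInner, add_mul, Finset.sum_add_distrib]

lemma qInner_mul_left (x y : Fin n → ℍ[ℝ]) (q : ℍ[ℝ]) :
    qInner (fun k => x k * q) y = qInner x y * q := by
  simp [qInner, Finset.sum_mul, mul_assoc]

lemma qInner_mul_right (x y : Fin n → ℍ[ℝ]) (q : ℍ[ℝ]) :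
    qInner x (fun k => y k * q) = star q * qInner x y := by
  simp [qInner, Finset.mul_sum, mul_assoc]

lemma star_qInner (x y : Fin n → ℍ[ℝ]) : star (qInner x y) = qInner y x := by
  simp [qInner, star_sum]

lemma qInner_mulVec_left (A : Matrix (Fin n) (Fin n) ℍ[ℝ]) (x y : Fin n → ℍ[ℝ]) :
    qInner (A *ᵥ x) y = qInner x (Aᴴ *ᵥ y) := by
  simp only [qInner, mulVec, dotProduct, conjTranspose_apply, Finset.mul_sum, Finset.sum_mul,
    star_sum, star_mul, star_star]
  rw [Finset.sum_comm]
  simp [mul_assoc]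

end QInner

lemma mul_mul_inv_mul_of_commute {G₀ : Type*} [GroupWithZero G₀] {a r : G₀} (hr : Commute a r)
    (ha : a ≠ 0) (s : G₀) : a * (r * a⁻¹ * s) = r * s := by
  rw [← mul_assoc, ← mul_assoc, hr.eq, mul_inv_cancel_right₀ ha]

lemma eq_add_add_of_normalized {n : ℕ} {x y z u ubar : Fin n → ℍ[ℝ]} {p q : ℍ[ℝ]} {r : ℝ}
    (hr : r ≠ 0) (hubar : ubar = fun k => x k - y k * p - z k * q)
    (hu : u = fun k => ubar k / (r : ℍ[ℝ])) :
    x = fun k => u k * r + y k * p + z k * q := by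
  subst hu hubar
  funext k
  dsimp only
  rw [div_mul_cancel₀ _ (coe_injective.ne hr), sub_sub, add_assoc, sub_add_cancel]

section Biorthogonality

variable {n m : ℕ} {A : Matrix (Fin n) (Fin n) ℍ[ℝ]} {v w : ℕ → Fin n → ℍ[ℝ]}
  {ρ ε α β τ δ : ℕ → ℍ[ℝ]} {k : ℕ}

def IsBiorthogonalUpTo (v w : ℕ → Fin n → ℍ[ℝ]) (k : ℕ) : Prop :=
  ∀ i ≤ k, ∀ j ≤ k, i ≠ j → qInner (v i) (w j) = 0

lemma IsBiorthogonalUpTo.swap (h : IsBiorthogonalUpTo v w k) : IsBiorthogonalUpTo w v k :=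
  fun i hi j hj hij => by rw [← star_qInner, h j hj i hi hij.symm, star_zero]

lemma IsBiorthogonalUpTo.succ (h : IsBiorthogonalUpTo v w k)
    (hv : ∀ j ≤ k, qInner (v (k + 1)) (w j) = 0) (hw : ∀ i ≤ k, qInner (v i) (w (k + 1)) = 0) :
    IsBiorthogonalUpTo v w (k + 1) := by
  intro i hi j hj hij
  rcases Nat.le_succ_iff.mp hi with hi | rfl <;> rcases Nat.le_succ_iff.mp hj with hj | rfl
  · exact h i hi j hj hij
  · exact hw i hi
  · exact hv j hj
  · exact absurd rfl hij

/-- `β` stands for `ᾱ` and `δⱼ` for `ρⱼ σⱼ₋₁^{-*} σⱼ*`; the explicit formulas for the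
coefficients are replaced by the identities they satisfy, with `σ = ⟨v, w⟩`. -/
structure IsTwoSidedLanczos (m : ℕ) (A : Matrix (Fin n) (Fin n) ℍ[ℝ])
    (v w : ℕ → Fin n → ℍ[ℝ]) (ρ ε α β τ δ : ℕ → ℍ[ℝ]) : Prop where
  v_zero : v 0 = 0
  w_zero : w 0 = 0
  mulVec_v : ∀ j, 1 ≤ j → j < m →
    A *ᵥ v j = fun l => v (j + 1) l * ρ (j + 1) + v j l * α j + v (j - 1) l * τ j
  mulVec_w : ∀ j, 1 ≤ j → j < m →
    Aᴴ *ᵥ w j = fun l => w (j + 1) l * ε (j + 1) + w j l * β j + w (j - 1) l * δ j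
  ρ_ne_zero : ∀ j, 1 ≤ j → j < m → ρ (j + 1) ≠ 0
  ε_ne_zero : ∀ j, 1 ≤ j → j < m → ε (j + 1) ≠ 0
  qInner_mul_α : ∀ j, 1 ≤ j → j < m → qInner (v j) (w j) * α j = qInner (A *ᵥ v j) (w j)
  qInner_mul_β : ∀ j, 1 ≤ j → j < m → qInner (w j) (v j) * β j = qInner (Aᴴ *ᵥ w j) (v j)
  qInner_mul_τ : ∀ j, 1 ≤ j → j + 1 < m →
    qInner (v j) (w j) * τ (j + 1) = star (ε (j + 1)) * qInner (v (j + 1)) (w (j + 1))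
  qInner_mul_δ : ∀ j, 1 ≤ j → j + 1 < m →
    qInner (w j) (v j) * δ (j + 1) = star (ρ (j + 1)) * qInner (w (j + 1)) (v (j + 1))

namespace IsTwoSidedLanczos

lemma symm (h : IsTwoSidedLanczos m A v w ρ ε α β τ δ) :
    IsTwoSidedLanczos m Aᴴ w v ε ρ β α δ τ where
  v_zero := h.w_zero
  w_zero := h.v_zero
  mulVec_v := h.mulVec_w
  mulVec_w := by simpa only [conjTranspose_conjTranspose] using h.mulVec_v
  ρ_ne_zero := h.ε_ne_zero
  ε_ne_zero := h.ρ_ne_zero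
  qInner_mul_α := h.qInner_mul_β
  qInner_mul_β := by simpa only [conjTranspose_conjTranspose] using h.qInner_mul_α
  qInner_mul_τ := h.qInner_mul_δ
  qInner_mul_δ := h.qInner_mul_τ

lemma qInner_mulVec_eq (h : IsTwoSidedLanczos m A v w ρ ε α β τ δ) (hk : k < m)
    (horth : IsBiorthogonalUpTo v w k) {j : ℕ} (hj1 : 1 ≤ j) (hjk : j ≤ k) :
    qInner (A *ᵥ v k) (w j) = qInner (v k) (w j) * α k + qInner (v (k - 1)) (w j) * τ k := by
  rcases hjk.eq_or_lt with rfl | hjk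
  · rw [← h.qInner_mul_α j hj1 hk, horth (j - 1) (by omega) j le_rfl (by omega), zero_mul,
      add_zero]
  rw [qInner_mulVec_left, h.mulVec_w j hj1 (by omega), qInner_add_right, qInner_add_right,
    qInner_mul_right, qInner_mul_right, qInner_mul_right, horth k le_rfl j hjk.le (by omega),
    horth k le_rfl (j - 1) (by omega) (by omega)]
  rcases (show j + 1 ≤ k by omega).eq_or_lt with rfl | hjk'
  · rw [Nat.add_sub_cancel, ← h.qInner_mul_τ j hj1 hk]
    simp
  · rw [horth k le_rfl (j + 1) hjk'.le (by omega), horth (k - 1) (by omega) j hjk.le (by omega)]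
    simp

lemma qInner_succ_left_eq_zero (h : IsTwoSidedLanczos m A v w ρ ε α β τ δ) (hk : k < m)
    (horth : IsBiorthogonalUpTo v w k) : ∀ j ≤ k, qInner (v (k + 1)) (w j) = 0 := by
  intro j hjk
  rcases Nat.eq_zero_or_pos j with rfl | hj1
  · rw [h.w_zero, qInner_zero_right]
  have hk1 : 1 ≤ k := by omega
  have hexpand : qInner (A *ᵥ v k) (w j) = qInner (v (k + 1)) (w j) * ρ (k + 1) +
      (qInner (v k) (w j) * α k + qInner (v (k - 1)) (w j) * τ k) := by
    rw [h.mulVec_v k hk1 hk, qInner_add_left, qInner_add_left, qInner_mul_left, qInner_mul_left,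
      qInner_mul_left, add_assoc]
  rw [h.qInner_mulVec_eq hk horth hj1 hjk, right_eq_add] at hexpand
  exact (mul_eq_zero.mp hexpand).resolve_right (h.ρ_ne_zero k hk1 hk)

lemma qInner_succ_right_eq_zero (h : IsTwoSidedLanczos m A v w ρ ε α β τ δ) (hk : k < m)
    (horth : IsBiorthogonalUpTo v w k) : ∀ i ≤ k, qInner (v i) (w (k + 1)) = 0 :=
  fun i hi => by rw [← star_qInner, h.symm.qInner_succ_left_eq_zero hk horth.swap i hi, star_zero]

lemma isBiorthogonalUpTo (h : IsTwoSidedLanczos m A v w ρ ε α β τ δ) :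
    ∀ k ≤ m, IsBiorthogonalUpTo v w k := by
  intro k
  induction k with
  | zero => exact fun _ i hi j hj hij => absurd (by omega) hij
  | succ k ih =>
    intro hk
    have horth := ih (by omega)
    exact horth.succ (h.qInner_succ_left_eq_zero hk horth) (h.qInner_succ_right_eq_zero hk horth)

end IsTwoSidedLanczos

end Biorthogonality

theorem qbio_biconjugate_orthonormality_general {n : ℕ} (m : ℕ)
    (A : Matrix (Fin n) (Fin n) ℍ[ℝ])
    (v w vbar wbar : ℕ → Fin n → ℍ[ℝ])
    (σ α αbar τ : ℕ → ℍ[ℝ]) (ρ ε : ℕ → ℝ)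
    (hv0 : v 0 = 0) (hw0 : w 0 = 0)
    (hσ : ∀ j, 1 ≤ j → j ≤ m → σ j = qInner (v j) (w j))
    (hσne : ∀ j, 1 ≤ j → j ≤ m → σ j ≠ 0)
    (hα : ∀ j, 1 ≤ j → j < m → α j = (σ j)⁻¹ * qInner (A *ᵥ v j) (w j))
    (hαbar : ∀ j, 1 ≤ j → j < m →
      αbar j = (star (σ j))⁻¹ * star (qInner (A *ᵥ v j) (w j)))
    (hvbar : ∀ j, 1 ≤ j → j < m →
      vbar (j + 1) = fun k => (A *ᵥ v j) k - v j k * α j - v (j - 1) k * τ j)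
    (hwbar : ∀ j, 1 ≤ j → j < m →
      wbar (j + 1) = fun k => (Aᴴ *ᵥ w j) k - w j k * αbar j -
        w (j - 1) k * (((ρ j : ℝ) : ℍ[ℝ]) * (star (σ (j - 1)))⁻¹ * star (σ j)))
    (hρne : ∀ j, 1 ≤ j → j < m → ρ (j + 1) ≠ 0)
    (hεne : ∀ j, 1 ≤ j → j < m → ε (j + 1) ≠ 0)
    (hvn : ∀ j, 1 ≤ j → j < m →
      v (j + 1) = fun k => vbar (j + 1) k / ((ρ (j + 1) : ℝ) : ℍ[ℝ]))
    (hwn : ∀ j, 1 ≤ j → j < m →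
      w (j + 1) = fun k => wbar (j + 1) k / ((ε (j + 1) : ℝ) : ℍ[ℝ]))
    (hτ : ∀ j, 1 ≤ j → j < m →
      τ (j + 1) = ((ε (j + 1) : ℝ) : ℍ[ℝ]) * (σ j)⁻¹ * σ (j + 1)) :
    ∀ i j, 1 ≤ i → i ≤ m → 1 ≤ j → j ≤ m →
      (i ≠ j → qInner (v i) (w j) = 0) ∧ qInner (v j) (w j) = σ j := by
  have hσw : ∀ j, 1 ≤ j → j ≤ m → qInner (w j) (v j) = star (σ j) := fun j h1 h2 => by
    rw [hσ j h1 h2, star_qInner]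
  have h : IsTwoSidedLanczos m A v w (fun j => ρ j) (fun j => ε j) α αbar τ
      (fun j => (ρ j : ℍ[ℝ]) * (star (σ (j - 1)))⁻¹ * star (σ j)) :=
    { v_zero := hv0
      w_zero := hw0
      mulVec_v := fun j h1 h2 =>
        eq_add_add_of_normalized (hρne j h1 h2) (hvbar j h1 h2) (hvn j h1 h2)
      mulVec_w := fun j h1 h2 =>
        eq_add_add_of_normalized (hεne j h1 h2) (hwbar j h1 h2) (hwn j h1 h2)
      ρ_ne_zero := fun j h1 h2 => coe_injective.ne (hρne j h1 h2)
      ε_ne_zero := fun j h1 h2 => coe_injective.ne (hεne j h1 h2)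
      qInner_mul_α := fun j h1 h2 => by
        rw [hα j h1 h2, ← hσ j h1 h2.le, mul_inv_cancel_left₀ (hσne j h1 h2.le)]
      qInner_mul_β := fun j h1 h2 => by
        rw [hαbar j h1 h2, hσw j h1 h2.le,
          mul_inv_cancel_left₀ (star_ne_zero.mpr (hσne j h1 h2.le)), star_qInner, qInner_mulVec_left, conjTranspose_conjTranspose]
      qInner_mul_τ := fun j h1 h2 => by
        rw [hτ j h1 (by omega), ← hσ j h1 (by omega), ← hσ (j + 1) (by omega) h2.le, star_coe]
        exact mul_mul_inv_mul_of_commute (coe_commute _ _).symm (hσne j h1 (by omega)) _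
      qInner_mul_δ := fun j h1 h2 => by
        rw [hσw j h1 (by omega), hσw (j + 1) (by omega) h2.le, Nat.add_sub_cancel, star_coe]
        exact mul_mul_inv_mul_of_commute (coe_commute _ _).symm
          (star_ne_zero.mpr (hσne j h1 (by omega))) _ }
  intro i j hi1 him hj1 hjm
  exact ⟨h.isBiorthogonalUpTo m le_rfl i him j hjm, (hσ j hj1 hjm).symm⟩

theorem qbio_biconjugate_orthonormality {n : ℕ} (m : ℕ)
    (A : Matrix (Fin n) (Fin n) ℍ[ℝ])
    (v w vbar wbar : ℕ → Fin n → ℍ[ℝ])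
    (σ α αbar τ : ℕ → ℍ[ℝ]) (ρ ε : ℕ → ℝ)
    (hv0 : v 0 = 0) (hw0 : w 0 = 0) (hτ1 : τ 1 = 0)
    (hv1 : qNorm (v 1) = 1) (hw1 : qNorm (w 1) = 1)
    (hσ : ∀ j, 1 ≤ j → j ≤ m → σ j = qInner (v j) (w j))
    (hσne : ∀ j, 1 ≤ j → j ≤ m → σ j ≠ 0)
    (hα : ∀ j, 1 ≤ j → j < m → α j = (σ j)⁻¹ * qInner (A *ᵥ v j) (w j))
    (hαbar : ∀ j, 1 ≤ j → j < m →
      αbar j = (star (σ j))⁻¹ * star (qInner (A *ᵥ v j) (w j)))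
    (hvbar : ∀ j, 1 ≤ j → j < m →
      vbar (j + 1) = fun k => (A *ᵥ v j) k - v j k * α j - v (j - 1) k * τ j)
    (hwbar : ∀ j, 1 ≤ j → j < m →
      wbar (j + 1) = fun k => (Aᴴ *ᵥ w j) k - w j k * αbar j -
        w (j - 1) k * (((ρ j : ℝ) : ℍ[ℝ]) * (star (σ (j - 1)))⁻¹ * star (σ j)))
    (hρ : ∀ j, 1 ≤ j → j < m → ρ (j + 1) = qNorm (vbar (j + 1)))
    (hε : ∀ j, 1 ≤ j → j < m → ε (j + 1) = qNorm (wbar (j + 1)))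
    (hρne : ∀ j, 1 ≤ j → j < m → ρ (j + 1) ≠ 0)
    (hεne : ∀ j, 1 ≤ j → j < m → ε (j + 1) ≠ 0)
    (hvn : ∀ j, 1 ≤ j → j < m →
      v (j + 1) = fun k => vbar (j + 1) k / ((ρ (j + 1) : ℝ) : ℍ[ℝ]))
    (hwn : ∀ j, 1 ≤ j → j < m →
      w (j + 1) = fun k => wbar (j + 1) k / ((ε (j + 1) : ℝ) : ℍ[ℝ]))
    (hτ : ∀ j, 1 ≤ j → j < m →
      τ (j + 1) = ((ε (j + 1) : ℝ) : ℍ[ℝ]) * (σ j)⁻¹ * σ (j + 1)) :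
    ∀ i j, 1 ≤ i → i ≤ m → 1 ≤ j → j ≤ m →
      (i ≠ j → qInner (v i) (w j) = 0) ∧ qInner (v j) (w j) = σ j :=
  qbio_biconjugate_orthonormality_general m A v w vbar wbar σ α αbar τ ρ ε hv0 hw0 hσ hσne hα hαbar
    hvbar hwbar hρne hεne hvn hwn hτ
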